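/- Let λ_i(t) and μ_i(t) (i = 1,...,n) be ordered tuples of real numbers depending on t, with λ_i(t) − μ_i(t) → 0 as t → ∞ for each i, and suppose each λ_i(t) converges to a limit λ_i with λ_1 ≥ 0, ∑ λ_i < 0, and ∑_{i=1}^j λ_i ≠ 0 for the critical index j. Then d^{KY}(λ(t)) and d^{KY}(μ(t)) converge to the same limit d^{KY}(λ). -/
import Mathlib


open Filter

/-- Partial sum of the first j entries of an ordered tuple. -/
noncomputable def pSum {n : ℕ} (l : Fin n → ℝ) (j : ℕ) : ℝ :=
  ∑ i ∈ Finset.univ.filter (fun i : Fin n => (i : ℕ) < j), l i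

open Classical in
/-- Kaplan–Yorke dimension of an ordered tuple of Lyapunov exponents. -/
noncomputable def dKY {n : ℕ} (l : Fin n → ℝ) : ℝ :=
  if hn : n = 0 then 0
  else if l ⟨0, Nat.pos_of_ne_zero hn⟩ < 0 then 0
  else if 0 ≤ pSum l n then n
  else
    (Nat.findGreatest (fun k => 0 ≤ pSum l k) (n - 1) : ℝ) +
      pSum l (Nat.findGreatest (fun k => 0 ≤ pSum l k) (n - 1)) /
        |l ⟨Nat.findGreatest (fun k => 0 ≤ pSum l k) (n - 1),
            Nat.lt_of_le_of_lt (Nat.findGreatest_le (n - 1))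
              (Nat.sub_lt (Nat.pos_of_ne_zero hn) one_pos)⟩|

open Classical in
lemma dKY_eq_of_findGreatest {n : ℕ} (hn0 : n ≠ 0) (l : Fin n → ℝ)
    (h1 : ¬ l ⟨0, Nat.pos_of_ne_zero hn0⟩ < 0) (h2 : ¬ 0 ≤ pSum l n)
    {J : ℕ} (hJ : Nat.findGreatest (fun k => 0 ≤ pSum l k) (n - 1) = J) (hJn : J < n) :
    dKY l = (J : ℝ) + pSum l J / |l ⟨J, hJn⟩| := by
  subst hJ
  rw [dKY, dif_neg hn0, if_neg h1, if_neg h2]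

lemma pSum_tendsto {n : ℕ} (F : ℝ → Fin n → ℝ) (l : Fin n → ℝ)
    (hconv : ∀ i, Filter.Tendsto (fun t => F t i) Filter.atTop (nhds (l i))) (k : ℕ) :
    Filter.Tendsto (fun t => pSum (F t) k) Filter.atTop (nhds (pSum l k)) := by
  unfold pSum
  exact tendsto_finset_sum _ (fun i _ => hconv i)

lemma pSum_succ {n : ℕ} (l : Fin n → ℝ) {j : ℕ} (hj : j < n) :
    pSum l (j + 1) = pSum l j + l ⟨j, hj⟩ := by
  unfold pSum
  rw [show Finset.univ.filter (fun i : Fin n => (i : ℕ) < j + 1)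
      = insert ⟨j, hj⟩ (Finset.univ.filter (fun i : Fin n => (i : ℕ) < j)) by
    ext i; simp [Fin.ext_iff]; omega]
  rw [Finset.sum_insert (by simp)]
  ring

lemma pSum_univ {n : ℕ} (l : Fin n → ℝ) : pSum l n = ∑ i, l i := by
  unfold pSum
  rw [Finset.filter_true_of_mem (fun i _ => i.isLt)]

lemma dKY_tendsto_aux {n : ℕ} (hn : 0 < n) (F : ℝ → Fin n → ℝ) (l : Fin n → ℝ)
    (hconv : ∀ i, Filter.Tendsto (fun t => F t i) Filter.atTop (nhds (l i)))
    (hord : Antitone l) (hsum : ∑ i, l i < 0)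
    (hnd : pSum l (Nat.findGreatest (fun k => 0 ≤ pSum l k) (n - 1)) ≠ 0) :
    Filter.Tendsto (fun t => dKY (F t)) Filter.atTop (nhds (dKY l)) := by
  set J : ℕ := Nat.findGreatest (fun k => 0 ≤ pSum l k) (n - 1) with hJ
  have hJle : J ≤ n - 1 := Nat.findGreatest_le _
  have hJlt : J < n := Nat.lt_of_le_of_lt hJle (Nat.sub_lt hn one_pos)
  have hP0 : (0:ℝ) ≤ pSum l 0 := by simp [pSum]
  have hJpred : 0 ≤ pSum l J := Nat.findGreatest_spec (P := fun k => 0 ≤ pSum l k) (Nat.zero_le _) hP0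
  have hJpos : 0 < pSum l J := lt_of_le_of_ne hJpred (Ne.symm hnd)
  have hneg : ∀ k, J < k → k ≤ n - 1 → pSum l k < 0 := by
    intro k h1 h2
    have := Nat.findGreatest_is_greatest (hJ ▸ h1) h2
    simpa using not_le.1 this
  have hsumn : pSum l n < 0 := by rw [pSum_univ]; exact hsum
  have hsucc : pSum l (J + 1) < 0 := by
    rcases lt_or_eq_of_le hJle with h | h
    · exact hneg (J + 1) (Nat.lt_succ_self _) h
    · have hJn : J + 1 = n := by omega
      rw [hJn]; exact hsumn
  have hlJ : l ⟨J, hJlt⟩ < 0 := by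
    have h := pSum_succ l hJlt
    linarith
  have hl0 : 0 < l ⟨0, hn⟩ := by
    by_contra h
    push_neg at h
    have : pSum l J ≤ 0 := by
      unfold pSum
      apply Finset.sum_nonpos
      intro i _
      exact le_trans (hord (show (⟨0, hn⟩ : Fin n) ≤ i from by simp [Fin.le_def])) h
    linarith
  -- eventual conditions
  have e1 : ∀ᶠ t in Filter.atTop, 0 < F t ⟨0, hn⟩ :=
    (hconv _).eventually (eventually_gt_nhds hl0)
  have e2 : ∀ᶠ t in Filter.atTop, pSum (F t) n < 0 :=
    (pSum_tendsto F l hconv n).eventually (eventually_lt_nhds hsumn)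
  have e3 : ∀ᶠ t in Filter.atTop, 0 < pSum (F t) J :=
    (pSum_tendsto F l hconv J).eventually (eventually_gt_nhds hJpos)
  have e4 : ∀ᶠ t in Filter.atTop, ∀ k ∈ Finset.Icc (J + 1) (n - 1), pSum (F t) k < 0 := by
    rw [Filter.eventually_all_finset]
    intro k hk
    rw [Finset.mem_Icc] at hk
    exact (pSum_tendsto F l hconv k).eventually (eventually_lt_nhds (hneg k hk.1 hk.2))
  have key : ∀ᶠ t in Filter.atTop,
      dKY (F t) = (J : ℝ) + pSum (F t) J / |F t ⟨J, hJlt⟩| := by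
    filter_upwards [e1, e2, e3, e4] with t h1 h2 h3 h4
    have hfg : Nat.findGreatest (fun k => 0 ≤ pSum (F t) k) (n - 1) = J := by
      rw [Nat.findGreatest_eq_iff]
      refine ⟨hJle, fun _ => h3.le, fun k hk1 hk2 => ?_⟩
      exact not_le.2 (h4 k (Finset.mem_Icc.2 ⟨hk1, hk2⟩))
    exact dKY_eq_of_findGreatest hn.ne' (F t) (not_lt.2 h1.le) (not_le.2 h2) hfg hJlt
  have hdl : dKY l = (J : ℝ) + pSum l J / |l ⟨J, hJlt⟩| :=
    dKY_eq_of_findGreatest hn.ne' l (not_lt.2 hl0.le) (not_le.2 hsumn) rfl hJlt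
  rw [hdl]
  apply Filter.Tendsto.congr' (Filter.EventuallyEq.symm key)
  exact tendsto_const_nhds.add
    ((pSum_tendsto F l hconv J).div ((hconv _).abs) (abs_ne_zero.2 hlJ.ne))

open Classical in
/-- If two families of ordered finite-time exponents differ by o(1) and one of them
converges to a nondegenerate ordered tuple, both Kaplan–Yorke dimensions converge to the
Kaplan–Yorke dimension of the limit tuple. -/
theorem kaplan_yorke_limit_invariance {n : ℕ} (hn : 0 < n)
    (lt mt : ℝ → Fin n → ℝ) (l : Fin n → ℝ)
    (hordl : ∀ t, Antitone (lt t)) (hordm : ∀ t, Antitone (mt t))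
    (hdiff : ∀ i, Tendsto (fun t => lt t i - mt t i) atTop (nhds 0))
    (hconv : ∀ i, Tendsto (fun t => lt t i) atTop (nhds (l i)))
    (hord : Antitone l) (hl1 : 0 ≤ l ⟨0, hn⟩) (hsum : ∑ i, l i < 0)
    (hnd : pSum l (Nat.findGreatest (fun k => 0 ≤ pSum l k) (n - 1)) ≠ 0) :
    Tendsto (fun t => dKY (lt t)) atTop (nhds (dKY l)) ∧
    Tendsto (fun t => dKY (mt t)) atTop (nhds (dKY l)) := by
  have hconvm : ∀ i, Tendsto (fun t => mt t i) atTop (nhds (l i)) := by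
    intro i
    have := (hconv i).sub (hdiff i)
    simpa using this
  exact ⟨dKY_tendsto_aux hn lt l hconv hord hsum hnd,
    dKY_tendsto_aux hn mt l hconvm hord hsum hnd⟩
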